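/- arXiv:2502.07265 — 2 statements merged into one kernel-verified Lean document; each statement's English description precedes it below -/
import Mathlib

section
/- Let (M, d) be a metric space, let f : M → ℝ be Lipschitz with constant L₁ > 0, let C_ε > 0 be a constant, and let d₀ ≥ 2 be an integer. Set η = C_ε/(L₁² d₀), t = C_ε/(L₁² (d₀ − 1)) and T = C_ε/(L₁² (d₀ + 1)). Then for every fixed y ∈ M and every x ∈ M one has the sandwich inequality: (1/(2T))·d(x,y)² + C_ε ≥ f(x) + (1/(2η))·d(x,y)² − f(y) + C_ε/2 ≥ (1/(2t))·d(x,y)². In particular, the acceptance ratio V(x) := exp(−f(x) + f(y) − d(x,y)²/(2η) − C_ε/2) / exp(−d(x,y)²/(2t)) satisfies V(x) ≤ 1 for all x ∈ M. -/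
open Real

/-- Proposition (prortt): with step size `η = Cε/(L₁² d₀)`, proposal variance
`t = Cε/(L₁² (d₀ - 1))` and `T = Cε/(L₁² (d₀ + 1))`, the potential
`f(x) + d(x,y)²/(2η) - f(y) + Cε/2` is sandwiched between the two quadratics, and
consequently the rejection-sampling acceptance ratio is at most one. -/
theorem stmt_0 {M : Type*} [MetricSpace M]
    (f : M → ℝ) (L₁ Cε : ℝ) (hL₁ : 0 < L₁) (hCε : 0 < Cε)
    (hf : ∀ x y : M, |f x - f y| ≤ L₁ * dist x y)
    (d₀ : ℕ) (hd₀ : 2 ≤ d₀)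
    (η t T : ℝ)
    (hη : η = Cε / (L₁ ^ 2 * (d₀ : ℝ)))
    (ht : t = Cε / (L₁ ^ 2 * ((d₀ : ℝ) - 1)))
    (hT : T = Cε / (L₁ ^ 2 * ((d₀ : ℝ) + 1))) :
    ∀ y x : M,
      ((1 / (2 * T)) * dist x y ^ 2 + Cε ≥
          f x + (1 / (2 * η)) * dist x y ^ 2 - f y + Cε / 2 ∧
        f x + (1 / (2 * η)) * dist x y ^ 2 - f y + Cε / 2 ≥
          (1 / (2 * t)) * dist x y ^ 2) ∧
      Real.exp (-f x + f y - dist x y ^ 2 / (2 * η) - Cε / 2) /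
          Real.exp (-dist x y ^ 2 / (2 * t)) ≤ 1 := by
  have hD : (2:ℝ) ≤ (d₀ : ℝ) := by exact_mod_cast hd₀
  have hL2 : (0:ℝ) < L₁ ^ 2 := by positivity
  have hCne : Cε ≠ 0 := ne_of_gt hCε
  have hLne : L₁ ≠ 0 := ne_of_gt hL₁
  have hDne : (d₀ : ℝ) ≠ 0 := by linarith
  have hDm : (d₀ : ℝ) - 1 ≠ 0 := by linarith
  have hDp : (d₀ : ℝ) + 1 ≠ 0 := by linarith
  have eη : 1 / (2 * η) = L₁ ^ 2 * (d₀ : ℝ) / (2 * Cε) := by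
    rw [hη]; field_simp
  have et : 1 / (2 * t) = L₁ ^ 2 * ((d₀ : ℝ) - 1) / (2 * Cε) := by
    rw [ht]; field_simp
  have eT : 1 / (2 * T) = L₁ ^ 2 * ((d₀ : ℝ) + 1) / (2 * Cε) := by
    rw [hT]; field_simp
  intro y x
  have hr0 : 0 ≤ dist x y := dist_nonneg
  obtain ⟨h2, h1⟩ := abs_le.mp (hf x y)
  have key : L₁ * dist x y ≤ L₁ ^ 2 * dist x y ^ 2 / (2 * Cε) + Cε / 2 := by
    rw [div_add' _ _ _ (by positivity), le_div_iff₀ (by positivity)]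
    nlinarith [sq_nonneg (L₁ * dist x y - Cε)]
  have upper : (1 / (2 * T)) * dist x y ^ 2 + Cε ≥
      f x + (1 / (2 * η)) * dist x y ^ 2 - f y + Cε / 2 := by
    rw [eη, eT]
    have : L₁ ^ 2 * ((d₀ : ℝ) + 1) / (2 * Cε) * dist x y ^ 2 -
        L₁ ^ 2 * (d₀ : ℝ) / (2 * Cε) * dist x y ^ 2 =
        L₁ ^ 2 * dist x y ^ 2 / (2 * Cε) := by ring
    nlinarith [key, h1]
  have lower : f x + (1 / (2 * η)) * dist x y ^ 2 - f y + Cε / 2 ≥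
      (1 / (2 * t)) * dist x y ^ 2 := by
    rw [eη, et]
    have : L₁ ^ 2 * (d₀ : ℝ) / (2 * Cε) * dist x y ^ 2 -
        L₁ ^ 2 * ((d₀ : ℝ) - 1) / (2 * Cε) * dist x y ^ 2 =
        L₁ ^ 2 * dist x y ^ 2 / (2 * Cε) := by ring
    nlinarith [key, h2]
  refine ⟨⟨upper, lower⟩, ?_⟩
  rw [← Real.exp_sub, Real.exp_le_one_iff]
  have e1 : dist x y ^ 2 / (2 * η) = (1 / (2 * η)) * dist x y ^ 2 := by ring
  have e2 : -dist x y ^ 2 / (2 * t) = -((1 / (2 * t)) * dist x y ^ 2) := by ring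
  rw [e1, e2]
  linarith [lower]
end

section
/- Let (M, 𝓕, V) be a measure space, let f : M → ℝ be measurable with A₂ ≤ e^{−f(x)} ≤ A₁ for all x ∈ M, where 0 < A₂ ≤ A₁ < ∞, and let ν, ν_l : M → [0, ∞) be V-integrable functions with ∫_M |ν(x) − ν_l(x)| dV(x) ≤ ζ. Set Z₂ := ∫_M e^{−f(x)} ν(x) dV(x) and Z₁ := ∫_M e^{−f(x)} ν_l(x) dV(x), and assume Z₁ > 0 and Z₂ > 0. Then the total variation distance between the probability measures with densities e^{−f}ν_l/Z₁ and e^{−f}ν/Z₂ with respect to V satisfies: (1/2) ∫_M | e^{−f(x)}ν_l(x)/Z₁ − e^{−f(x)}ν(x)/Z₂ | dV(x) ≤ A₁ζ/(2·max(Z₁, Z₂)) + A₁ζ·(Z₂ + A₁ζ)/(2·Z₁Z₂). In particular |Z₂ − Z₁| ≤ A₁ζ. -/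
open MeasureTheory

/-- Auxiliary: bound on the L¹ distance of two normalized densities. -/
lemma aux_tv {M : Type*} [MeasurableSpace M] (V : Measure M)
    (p q : M → ℝ) (hp : Integrable p V) (hq : Integrable q V)
    (hqnn : ∀ x, 0 ≤ q x) (Z₁ Z₂ : ℝ) (h1 : 0 < Z₁) (h2 : 0 < Z₂) :
    ∫ x, |p x / Z₁ - q x / Z₂| ∂V ≤
      (∫ x, |p x - q x| ∂V) / Z₁ + (∫ x, q x ∂V) * (|Z₂ - Z₁| / (Z₁ * Z₂)) := by
  have key : ∀ x, |p x / Z₁ - q x / Z₂| ≤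
      |p x - q x| / Z₁ + q x * (|Z₂ - Z₁| / (Z₁ * Z₂)) := by
    intro x
    have hsplit : p x / Z₁ - q x / Z₂ =
        (p x - q x) / Z₁ + q x * ((Z₂ - Z₁) / (Z₁ * Z₂)) := by
      field_simp; ring
    rw [hsplit]
    refine (abs_add_le _ _).trans ?_
    have h1' : |(p x - q x) / Z₁| = |p x - q x| / Z₁ := by
      rw [abs_div, abs_of_pos h1]
    have h2' : |q x * ((Z₂ - Z₁) / (Z₁ * Z₂))| = q x * (|Z₂ - Z₁| / (Z₁ * Z₂)) := by
      rw [abs_mul, abs_of_nonneg (hqnn x), abs_div, abs_of_pos (mul_pos h1 h2)]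
    rw [h1', h2']
  have hint1 : Integrable (fun x => |p x / Z₁ - q x / Z₂|) V :=
    ((hp.div_const Z₁).sub (hq.div_const Z₂)).abs
  have hint2 : Integrable (fun x => |p x - q x| / Z₁ + q x * (|Z₂ - Z₁| / (Z₁ * Z₂))) V :=
    ((hp.sub hq).abs.div_const Z₁).add (hq.mul_const _)
  calc ∫ x, |p x / Z₁ - q x / Z₂| ∂V
      ≤ ∫ x, (|p x - q x| / Z₁ + q x * (|Z₂ - Z₁| / (Z₁ * Z₂))) ∂V :=
        integral_mono hint1 hint2 key
    _ = (∫ x, |p x - q x| ∂V) / Z₁ + (∫ x, q x ∂V) * (|Z₂ - Z₁| / (Z₁ * Z₂)) := by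
        have e1 : Integrable (fun x => |p x - q x| / Z₁) V := (hp.sub hq).abs.div_const Z₁
        have e2 : Integrable (fun x => q x * (|Z₂ - Z₁| / (Z₁ * Z₂))) V := hq.mul_const _
        rw [integral_add e1 e2, integral_div, integral_mul_const]

/-- Quantitative form of Step 1 of Proposition 10 (Prop_truncation_1): if the truncated
heat kernel `ν_l` is `ζ`-close to `ν` in `L¹(V)` and `A₂ ≤ e^{−f} ≤ A₁`, then the
normalizing constants `Z₁ = ∫ e^{−f} ν_l dV` and `Z₂ = ∫ e^{−f} ν dV` satisfy
`|Z₂ − Z₁| ≤ A₁ ζ`, and the total variation distance between the normalized densities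
`e^{−f} ν_l / Z₁` and `e^{−f} ν / Z₂` (half the `L¹` distance) is at most
`A₁ζ/(2 max(Z₁,Z₂)) + A₁ζ(Z₂ + A₁ζ)/(2 Z₁ Z₂)`. -/
theorem stmt_13 {M : Type*} [MeasurableSpace M] (V : Measure M)
    (f : M → ℝ) (A₁ A₂ ζ : ℝ) (hA₂ : 0 < A₂) (hA : A₂ ≤ A₁)
    (hfb : ∀ x, A₂ ≤ Real.exp (-f x) ∧ Real.exp (-f x) ≤ A₁)
    (ν νl : M → ℝ) (hνnn : ∀ x, 0 ≤ ν x) (hνlnn : ∀ x, 0 ≤ νl x)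
    (hνint : Integrable ν V) (hνlint : Integrable νl V)
    (hL1 : ∫ x, |ν x - νl x| ∂V ≤ ζ)
    (Z₁ Z₂ : ℝ)
    (hZ₁ : Z₁ = ∫ x, Real.exp (-f x) * νl x ∂V)
    (hZ₂ : Z₂ = ∫ x, Real.exp (-f x) * ν x ∂V)
    (hZ₁pos : 0 < Z₁) (hZ₂pos : 0 < Z₂) :
    (1 / 2) * (∫ x, |Real.exp (-f x) * νl x / Z₁ - Real.exp (-f x) * ν x / Z₂| ∂V) ≤
      A₁ * ζ / (2 * max Z₁ Z₂) + A₁ * ζ * (Z₂ + A₁ * ζ) / (2 * (Z₁ * Z₂)) ∧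
    |Z₂ - Z₁| ≤ A₁ * ζ := by
  set p : M → ℝ := fun x => Real.exp (-f x) * νl x with hp_def
  set q : M → ℝ := fun x => Real.exp (-f x) * ν x with hq_def
  have hA₁pos : 0 < A₁ := lt_of_lt_of_le hA₂ hA
  -- integrability of p and q, from positivity of the integrals
  have hpint : Integrable p V := by
    by_contra h
    rw [hZ₁, integral_undef h] at hZ₁pos
    exact lt_irrefl 0 hZ₁pos
  have hqint : Integrable q V := by
    by_contra h
    rw [hZ₂, integral_undef h] at hZ₂pos
    exact lt_irrefl 0 hZ₂pos
  have hpnn : ∀ x, 0 ≤ p x := fun x => mul_nonneg (Real.exp_pos _).le (hνlnn x)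
  have hqnn : ∀ x, 0 ≤ q x := fun x => mul_nonneg (Real.exp_pos _).le (hνnn x)
  -- L¹ bound on p − q
  have hpq : ∫ x, |p x - q x| ∂V ≤ A₁ * ζ := by
    have hptw : ∀ x, |p x - q x| ≤ A₁ * |ν x - νl x| := by
      intro x
      have : p x - q x = Real.exp (-f x) * (νl x - ν x) := by ring
      rw [this, abs_mul, abs_of_pos (Real.exp_pos _), abs_sub_comm]
      exact mul_le_mul_of_nonneg_right (hfb x).2 (abs_nonneg _)
    calc ∫ x, |p x - q x| ∂V ≤ ∫ x, A₁ * |ν x - νl x| ∂V :=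
          integral_mono (hpint.sub hqint).abs ((hνint.sub hνlint).abs.const_mul A₁) hptw
      _ = A₁ * ∫ x, |ν x - νl x| ∂V := integral_const_mul _ _
      _ ≤ A₁ * ζ := mul_le_mul_of_nonneg_left hL1 hA₁pos.le
  have hζnn : 0 ≤ ζ :=
    le_trans (integral_nonneg fun x => abs_nonneg _) hL1
  have habs : |Z₂ - Z₁| ≤ A₁ * ζ := by
    have : Z₂ - Z₁ = ∫ x, (q x - p x) ∂V := by
      rw [hZ₁, hZ₂, integral_sub hqint hpint]
    rw [this]
    have hnorm := norm_integral_le_integral_norm (μ := V) (fun x => q x - p x)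
    simp only [Real.norm_eq_abs] at hnorm
    calc |∫ x, (q x - p x) ∂V| ≤ ∫ x, |q x - p x| ∂V := hnorm
      _ = ∫ x, |p x - q x| ∂V := by simp_rw [abs_sub_comm]
      _ ≤ A₁ * ζ := hpq
  refine ⟨?_, habs⟩
  have hZ₁' : ∫ x, p x ∂V = Z₁ := hZ₁.symm
  have hZ₂' : ∫ x, q x ∂V = Z₂ := hZ₂.symm
  rcases le_total Z₁ Z₂ with hle | hle
  · -- max = Z₂ : apply aux with roles swapped
    have hmax : max Z₁ Z₂ = Z₂ := max_eq_right hle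
    have haux := aux_tv V q p hqint hpint hpnn Z₂ Z₁ hZ₂pos hZ₁pos
    have hswap : (∫ x, |q x / Z₂ - p x / Z₁| ∂V) = ∫ x, |p x / Z₁ - q x / Z₂| ∂V := by
      simp_rw [abs_sub_comm]
    rw [hswap, hZ₁'] at haux
    have hqpabs : (∫ x, |q x - p x| ∂V) = ∫ x, |p x - q x| ∂V := by
      simp_rw [abs_sub_comm]
    rw [hqpabs] at haux
    have hZ1le : Z₁ ≤ Z₂ + A₁ * ζ := by
      have := abs_le.mp habs
      linarith [this.1]
    have habs' : |Z₁ - Z₂| ≤ A₁ * ζ := by rwa [abs_sub_comm]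
    have key : (∫ x, |p x / Z₁ - q x / Z₂| ∂V) ≤
        A₁ * ζ / Z₂ + A₁ * ζ * (Z₂ + A₁ * ζ) / (Z₁ * Z₂) := by
      refine haux.trans ?_
      have h1 : (∫ x, |p x - q x| ∂V) / Z₂ ≤ A₁ * ζ / Z₂ := by gcongr
      have h2 : Z₁ * (|Z₁ - Z₂| / (Z₂ * Z₁)) ≤ A₁ * ζ * (Z₂ + A₁ * ζ) / (Z₁ * Z₂) := by
        rw [mul_div_assoc', mul_comm Z₂ Z₁, div_le_div_iff_of_pos_right (by positivity)]
        have : Z₁ * |Z₁ - Z₂| ≤ (Z₂ + A₁ * ζ) * (A₁ * ζ) :=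
          mul_le_mul hZ1le habs' (abs_nonneg _) (by positivity)
        nlinarith [hZ₁pos, hZ₂pos]
      linarith
    rw [hmax]
    have : A₁ * ζ / (2 * Z₂) = (A₁ * ζ / Z₂) / 2 := by ring
    rw [this]
    have : A₁ * ζ * (Z₂ + A₁ * ζ) / (2 * (Z₁ * Z₂)) =
        (A₁ * ζ * (Z₂ + A₁ * ζ) / (Z₁ * Z₂)) / 2 := by ring
    rw [this]
    linarith
  · -- max = Z₁
    have hmax : max Z₁ Z₂ = Z₁ := max_eq_left hle
    have haux := aux_tv V p q hpint hqint hqnn Z₁ Z₂ hZ₁pos hZ₂pos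
    rw [hZ₂'] at haux
    have key : (∫ x, |p x / Z₁ - q x / Z₂| ∂V) ≤
        A₁ * ζ / Z₁ + A₁ * ζ * (Z₂ + A₁ * ζ) / (Z₁ * Z₂) := by
      refine haux.trans ?_
      have h1 : (∫ x, |p x - q x| ∂V) / Z₁ ≤ A₁ * ζ / Z₁ := by gcongr
      have h2 : Z₂ * (|Z₂ - Z₁| / (Z₁ * Z₂)) ≤ A₁ * ζ * (Z₂ + A₁ * ζ) / (Z₁ * Z₂) := by
        rw [mul_div_assoc', div_le_div_iff_of_pos_right (by positivity)]
        have : Z₂ * |Z₂ - Z₁| ≤ Z₂ * (A₁ * ζ) :=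
          mul_le_mul_of_nonneg_left habs hZ₂pos.le
        nlinarith [hZ₁pos, hZ₂pos, mul_nonneg (mul_nonneg hA₁pos.le hζnn) (mul_nonneg hA₁pos.le hζnn)]
      linarith
    rw [hmax]
    have : A₁ * ζ / (2 * Z₁) = (A₁ * ζ / Z₁) / 2 := by ring
    rw [this]
    have : A₁ * ζ * (Z₂ + A₁ * ζ) / (2 * (Z₁ * Z₂)) =
        (A₁ * ζ * (Z₂ + A₁ * ζ) / (Z₁ * Z₂)) / 2 := by ring
    rw [this]
    linarith
end
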